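/- Suppose φ_n ∈ L¹([a,b],ℂ) satisfies the approximate equation K_n(φ_n) − y = φ_n. Then the vector C_n := (c_{n,1}(φ_n), …, c_{n,n}(φ_n)) of cell averages of φ_n satisfies the nonlinear system A_n N(C_n) − C_n = Y_n, i.e., for each i = 1,…,n: Σ_{j=1}^{n} A_n(i,j)·N(c_{n,j}(φ_n)) − c_{n,i}(φ_n) = Y_n(i), where A_n(i,j) := (1/h_n) ∫_{t_{n,i−1}}^{t_{n,i}} w_{n,j}(s) ds, w_{n,j}(s) := ∫_{t_{n,j−1}}^{t_{n,j}} H(s,t)[L(s,t)]_n dt, and Y_n(i) := (1/h_n) ∫_{t_{n,i−1}}^{t_{n,i}} y(s) ds. -/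

import Mathlib

open MeasureTheory Set Filter
noncomputable section

/-- the grid node `t_{n,i} := a + i·h_n` with `h_n := (b-a)/n`. -/
def tnode (a b : ℝ) (n : ℕ) (i : ℕ) : ℝ := a + i * ((b - a) / n)

/-- the cell mean `c_{n,i}(x) := (1/h_n) ∫_{t_{n,i-1}}^{t_{n,i}} x(v) dv`. -/
def cmean (a b : ℝ) (n : ℕ) (x : ℝ → ℂ) (i : ℕ) : ℂ :=
  (((b - a) / n : ℝ) : ℂ)⁻¹ * ∫ v in (tnode a b n (i - 1))..(tnode a b n i), x v

/-- a representative of the step function `π_n(x)`. -/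
def pirep (a b : ℝ) (n : ℕ) (x : ℝ → ℂ) : ℝ → ℂ := fun t =>
  ∑ i ∈ Finset.Icc 1 n, Set.indicator (Ico (tnode a b n (i - 1)) (tnode a b n i))
    (fun _ => cmean a b n x i) t

/-- the linear interpolant of `t ↦ L(s,t)` on the `i`-th cell. -/
def interpSeg (a b : ℝ) (n : ℕ) (L : ℝ → ℝ → ℂ) (i : ℕ) (s t : ℝ) : ℂ :=
  (((b - a) / n : ℝ) : ℂ)⁻¹ *
    (((tnode a b n i - t : ℝ) : ℂ) * L s (tnode a b n (i - 1)) +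
     ((t - tnode a b n (i - 1) : ℝ) : ℂ) * L s (tnode a b n i))

/-- the piecewise linear interpolant `[L(s,t)]_n` (built on the half-open cells). -/
def Lint (a b : ℝ) (n : ℕ) (L : ℝ → ℝ → ℂ) (s t : ℝ) : ℂ :=
  ∑ i ∈ Finset.Icc 1 n, Set.indicator (Ico (tnode a b n (i - 1)) (tnode a b n i))
    (fun t' => interpSeg a b n L i s t') t

/-- `w_{n,j}(s) := ∫_{t_{n,j-1}}^{t_{n,j}} H(s,t)[L(s,t)]_n dt`. -/
def wQuad (a b : ℝ) (H L : ℝ → ℝ → ℂ) (n : ℕ) (j : ℕ) (s : ℝ) : ℂ :=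
  ∫ t in (tnode a b n (j - 1))..(tnode a b n j), H s t * interpSeg a b n L j s t

/-- `A_n(i,j) := (1/h_n) ∫_{t_{n,i-1}}^{t_{n,i}} w_{n,j}(s) ds`. -/
def Amat (a b : ℝ) (H L : ℝ → ℝ → ℂ) (n : ℕ) (i j : ℕ) : ℂ :=
  (((b - a) / n : ℝ) : ℂ)⁻¹ *
    ∫ s in (tnode a b n (i - 1))..(tnode a b n i), wQuad a b H L n j s

/-!
On the `j`-th cell `[t_{j-1}, t_j)` the interpolant `[L]_n` is the affine piece `interpSeg j` and
`π_n φ` is the constant `c_j(φ)`, so the kernel integral splits as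
`K_n(φ)(s) = Σ_j w_j(s) N(c_j(φ))`. The approximate equation thus reads
`φ = Σ_j w_j N(c_j(φ)) - y` a.e. on `[a,b]`; taking means over the `i`-th cell, a linear
operation, gives the `i`-th equation, because `A_n(i,j)` is the mean of `w_j` and `Y_n(i)` the
mean of `y` over that cell.
-/

theorem Finset.sum_indicator_apply_of_mem {ι α M : Type*} [AddCommMonoid M] {s : Finset ι}
    {S : ι → Set α} (hS : (s : Set ι).PairwiseDisjoint S) {j : ι} (hj : j ∈ s) {x : α}
    (hx : x ∈ S j) (f : ι → α → M) :
    ∑ i ∈ s, (S i).indicator (f i) x = f j x := by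
  rw [Finset.sum_eq_single_of_mem j hj, indicator_of_mem hx]
  intro i hi hij
  exact indicator_of_notMem (fun hxi => (hS hi hj hij).notMem_of_mem_left hxi hx) _

theorem Finset.sum_indicator_mul_comp_sum_indicator {ι α R R' : Type*}
    [NonUnitalNonAssocSemiring R] [AddCommMonoid R'] {s : Finset ι} {S : ι → Set α}
    (hS : (s : Set ι).PairwiseDisjoint S) (f : ι → α → R) (g : ι → α → R') (F : R' → R)
    (x : α) :
    (∑ i ∈ s, (S i).indicator (f i) x) * F (∑ i ∈ s, (S i).indicator (g i) x) =
      ∑ i ∈ s, (S i).indicator (fun y => f i y * F (g i y)) x := by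
  by_cases hx : ∃ j ∈ s, x ∈ S j
  · obtain ⟨j, hj, hxj⟩ := hx
    simp only [Finset.sum_indicator_apply_of_mem hS hj hxj]
  · simp only [not_exists, not_and] at hx
    rw [Finset.sum_eq_zero fun i hi => indicator_of_notMem (hx i hi) _, zero_mul,
      Finset.sum_eq_zero fun i hi => indicator_of_notMem (hx i hi) _]

section Grid

variable {a b : ℝ} {n : ℕ}

theorem tnode_mono (hab : a ≤ b) : Monotone (tnode a b n) := fun i j hij => by
  have : 0 ≤ (b - a) / n := div_nonneg (sub_nonneg.mpr hab) n.cast_nonneg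
  unfold tnode
  gcongr

theorem tnode_zero : tnode a b n 0 = a := by simp [tnode]

theorem tnode_self (hn : n ≠ 0) : tnode a b n n = b := by
  unfold tnode
  field_simp
  ring

theorem Icc_tnode_subset (hab : a ≤ b) {j : ℕ} (hj : j ∈ Finset.Icc 1 n) :
    Icc (tnode a b n (j - 1)) (tnode a b n j) ⊆ Icc a b := by
  obtain ⟨hj1, hjn⟩ := Finset.mem_Icc.mp hj
  refine Icc_subset_Icc ?_ ?_
  · simpa only [tnode_zero] using tnode_mono (n := n) hab (Nat.zero_le (j - 1))
  · simpa only [tnode_self (by omega : n ≠ 0)] using tnode_mono (n := n) hab hjn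

open Function in
/-- For `i = 0` the cell is empty, because of truncated subtraction. -/
theorem pairwise_disjoint_Ico_tnode (hab : a ≤ b) :
    Pairwise (Disjoint on fun i => Ico (tnode a b n (i - 1)) (tnode a b n i)) := by
  intro i j hij
  wlog hlt : i < j generalizing i j
  · exact (this hij.symm (by omega)).symm
  have : tnode a b n i ≤ tnode a b n (j - 1) := tnode_mono hab (by omega)
  exact Set.disjoint_left.mpr fun x hxi hxj => by linarith [hxi.2, hxj.1]

theorem pairwiseDisjoint_Ico_tnode (hab : a ≤ b) (s : Finset ℕ) :
    (s : Set ℕ).PairwiseDisjoint fun i => Ico (tnode a b n (i - 1)) (tnode a b n i) :=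
  (pairwise_disjoint_Ico_tnode hab).set_pairwise _

end Grid

section Kernel

variable {a b : ℝ} {n : ℕ} {H L : ℝ → ℝ → ℂ}

theorem Lint_eq_interpSeg (hab : a ≤ b) {j : ℕ} (hj : j ∈ Finset.Icc 1 n) (s : ℝ) {t : ℝ}
    (ht : t ∈ Ico (tnode a b n (j - 1)) (tnode a b n j)) :
    Lint a b n L s t = interpSeg a b n L j s t :=
  Finset.sum_indicator_apply_of_mem (pairwiseDisjoint_Ico_tnode hab _) hj ht _

theorem mul_Lint_mul_comp_pirep (hab : a ≤ b) (N : ℂ → ℂ) (x : ℝ → ℂ) (s t : ℝ) :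
    H s t * Lint a b n L s t * N (pirep a b n x t) =
      ∑ j ∈ Finset.Icc 1 n, (Ico (tnode a b n (j - 1)) (tnode a b n j)).indicator
        (fun t => H s t * interpSeg a b n L j s t) t * N (cmean a b n x j) := by
  rw [mul_assoc, Lint, pirep,
    Finset.sum_indicator_mul_comp_sum_indicator (pairwiseDisjoint_Ico_tnode hab _),
    Finset.mul_sum]
  refine Finset.sum_congr rfl fun j _ => ?_
  simp only [indicator_apply]
  split_ifs <;> ring

theorem integrableOn_Ico_tnode_mul_interpSeg (hab : a ≤ b) {j : ℕ} (hj : j ∈ Finset.Icc 1 n)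
    {s : ℝ} (hint : IntegrableOn (fun t => H s t * Lint a b n L s t) (Icc a b)) :
    IntegrableOn (fun t => H s t * interpSeg a b n L j s t)
      (Ico (tnode a b n (j - 1)) (tnode a b n j)) :=
  (hint.mono_set (Ico_subset_Icc_self.trans (Icc_tnode_subset hab hj))).congr_fun
    (fun t ht => congrArg (H s t * ·) (Lint_eq_interpSeg hab hj s ht)) measurableSet_Ico

theorem setIntegral_Ico_tnode (hab : a ≤ b) (j : ℕ) (f : ℝ → ℂ) :
    ∫ t in Ico (tnode a b n (j - 1)) (tnode a b n j), f t =
      ∫ t in tnode a b n (j - 1)..tnode a b n j, f t := by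
  rw [intervalIntegral.integral_of_le (tnode_mono hab (Nat.sub_le j 1)),
    integral_Ico_eq_integral_Ioo, integral_Ioc_eq_integral_Ioo]

theorem integral_mul_Lint_mul_comp_pirep (hab : a ≤ b) (N : ℂ → ℂ) (x : ℝ → ℂ) {s : ℝ}
    (hint : IntegrableOn (fun t => H s t * Lint a b n L s t) (Icc a b)) :
    ∫ t in Icc a b, H s t * Lint a b n L s t * N (pirep a b n x t) =
      ∑ j ∈ Finset.Icc 1 n, wQuad a b H L n j s * N (cmean a b n x j) := by
  simp_rw [mul_Lint_mul_comp_pirep hab]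
  rw [integral_finsetSum _ fun j hj =>
    (((integrableOn_Ico_tnode_mul_interpSeg hab hj hint).integrable_indicator
      measurableSet_Ico).integrableOn).mul_const _]
  refine Finset.sum_congr rfl fun j hj => ?_
  rw [integral_mul_const, integral_indicator measurableSet_Ico,
    Measure.restrict_restrict measurableSet_Ico,
    inter_eq_self_of_subset_left (Ico_subset_Icc_self.trans (Icc_tnode_subset hab hj)),
    setIntegral_Ico_tnode hab, wQuad]

end Kernel

section CellMean

variable {a b : ℝ} {n i : ℕ}

theorem MeasureTheory.IntegrableOn.intervalIntegrable_tnode {f : ℝ → ℂ} (hf : IntegrableOn f (Icc a b))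
    (hab : a ≤ b) (hi : i ∈ Finset.Icc 1 n) :
    IntervalIntegrable f volume (tnode a b n (i - 1)) (tnode a b n i) := by
  refine (hf.mono_set ?_).intervalIntegrable
  rw [uIcc_of_le (tnode_mono hab (Nat.sub_le i 1))]
  exact Icc_tnode_subset hab hi

theorem cmean_congr_ae (hab : a ≤ b) (hi : i ∈ Finset.Icc 1 n) {f g : ℝ → ℂ}
    (h : f =ᵐ[volume.restrict (Icc a b)] g) : cmean a b n f i = cmean a b n g i := by
  have hle := tnode_mono (n := n) hab (Nat.sub_le i 1)
  rw [cmean, cmean, intervalIntegral.integral_of_le hle, intervalIntegral.integral_of_le hle,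
    integral_congr_ae (ae_restrict_of_ae_restrict_of_subset
      (Ioc_subset_Icc_self.trans (Icc_tnode_subset hab hi)) h)]

theorem cmean_sub {f g : ℝ → ℂ}
    (hf : IntervalIntegrable f volume (tnode a b n (i - 1)) (tnode a b n i))
    (hg : IntervalIntegrable g volume (tnode a b n (i - 1)) (tnode a b n i)) :
    cmean a b n (fun t => f t - g t) i = cmean a b n f i - cmean a b n g i := by
  rw [cmean, cmean, cmean, intervalIntegral.integral_sub hf hg, mul_sub]

theorem cmean_finsetSum {ι : Type*} (s : Finset ι) {f : ι → ℝ → ℂ}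
    (hf : ∀ j ∈ s, IntervalIntegrable (f j) volume (tnode a b n (i - 1)) (tnode a b n i)) :
    cmean a b n (fun t => ∑ j ∈ s, f j t) i = ∑ j ∈ s, cmean a b n (f j) i := by
  rw [cmean, intervalIntegral.integral_finsetSum hf, Finset.mul_sum]
  rfl

theorem cmean_mul_const (f : ℝ → ℂ) (c : ℂ) :
    cmean a b n (fun t => f t * c) i = cmean a b n f i * c := by
  rw [cmean, cmean, intervalIntegral.integral_mul_const, mul_assoc]

theorem Amat_eq_cmean_wQuad (H L : ℝ → ℝ → ℂ) (j : ℕ) :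
    Amat a b H L n i j = cmean a b n (wQuad a b H L n j) i :=
  rfl

end CellMean

theorem approximate_solution_nonlinear_system_general (a b : ℝ) (hab : a < b)
    (H : ℝ → ℝ → ℂ)
    (L : ℝ → ℝ → ℂ)
    (N : ℂ → ℂ) (y : ℝ → ℂ) (hy : IntegrableOn y (Icc a b))
    (n : ℕ)
    (φn : ℝ → ℂ)
    -- Fubini-type integrability hypotheses
    (hint : ∀ s ∈ Icc a b, IntegrableOn (fun t => H s t * Lint a b n L s t) (Icc a b))
    (hw : ∀ j ∈ Finset.Icc 1 n, IntegrableOn (wQuad a b H L n j) (Icc a b))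
    -- `φ_n` satisfies `K_n(φ_n) - y = φ_n` (a.e. on `[a,b]`)
    (happrox : ∀ᵐ s ∂(volume.restrict (Icc a b)),
      (∫ t in Icc a b, H s t * Lint a b n L s t * N (pirep a b n φn t)) - y s = φn s) :
    ∀ i ∈ Finset.Icc 1 n,
      (∑ j ∈ Finset.Icc 1 n, Amat a b H L n i j * N (cmean a b n φn j))
          - cmean a b n φn i
        = (((b - a) / n : ℝ) : ℂ)⁻¹ *
            ∫ s in (tnode a b n (i - 1))..(tnode a b n i), y s := by
  intro i hi
  have hφn : φn =ᵐ[volume.restrict (Icc a b)]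
      fun s => ∑ j ∈ Finset.Icc 1 n, wQuad a b H L n j s * N (cmean a b n φn j) - y s := by
    filter_upwards [happrox, ae_restrict_mem measurableSet_Icc] with s hs hsab
    rw [← hs, integral_mul_Lint_mul_comp_pirep hab.le N φn (hint s hsab)]
  have hwN (j : ℕ) (hj : j ∈ Finset.Icc 1 n) :=
    ((hw j hj).intervalIntegrable_tnode hab.le hi).mul_const (N (cmean a b n φn j))
  have hsum := IntervalIntegrable.sum _ hwN
  rw [Finset.sum_fn] at hsum
  rw [cmean_congr_ae hab.le hi hφn, cmean_sub hsum (hy.intervalIntegrable_tnode hab.le hi),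
    cmean_finsetSum _ hwN]
  simp only [cmean_mul_const, Amat_eq_cmean_wQuad]
  exact sub_sub_self _ (cmean a b n y i)

/-- If `φ_n` satisfies the approximate equation `K_n(φ_n) - y = φ_n` (a.e. on `[a,b]`), then its
vector of cell means satisfies the nonlinear system `A_n N(C_n) - C_n = Y_n`:
for each `i = 1,…,n`, `Σ_j A_n(i,j) N(c_{n,j}(φ_n)) - c_{n,i}(φ_n) = Y_n(i)`. -/
theorem approximate_solution_nonlinear_system (a b : ℝ) (hab : a < b)
    (H : ℝ → ℝ → ℂ) (hH : Measurable (Function.uncurry H))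
    (L : ℝ → ℝ → ℂ)
    (hL : ContinuousOn (fun p : ℝ × ℝ => L p.1 p.2) (Icc a b ×ˢ Icc a b))
    (N : ℂ → ℂ) (y : ℝ → ℂ) (hy : IntegrableOn y (Icc a b))
    (n : ℕ) (hn : 1 ≤ n)
    (φn : ℝ → ℂ) (hφn : IntegrableOn φn (Icc a b))
    -- Fubini-type integrability hypotheses
    (hint : ∀ s ∈ Icc a b, IntegrableOn (fun t => H s t * Lint a b n L s t) (Icc a b))
    (hw : ∀ j ∈ Finset.Icc 1 n, IntegrableOn (wQuad a b H L n j) (Icc a b))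
    -- `φ_n` satisfies `K_n(φ_n) - y = φ_n` (a.e. on `[a,b]`)
    (happrox : ∀ᵐ s ∂(volume.restrict (Icc a b)),
      (∫ t in Icc a b, H s t * Lint a b n L s t * N (pirep a b n φn t)) - y s = φn s) :
    ∀ i ∈ Finset.Icc 1 n,
      (∑ j ∈ Finset.Icc 1 n, Amat a b H L n i j * N (cmean a b n φn j))
          - cmean a b n φn i
        = (((b - a) / n : ℝ) : ℂ)⁻¹ *
            ∫ s in (tnode a b n (i - 1))..(tnode a b n i), y s :=
  approximate_solution_nonlinear_system_general a b hab H L N y hy n φn hint hw happrox
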